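/- arXiv:1007.5488 — 3 statements merged into one kernel-verified Lean document; each statement's English description precedes it below -/
import Mathlib

section
/- In the stable-failures process model, the derived CSP(□,Ω) equations hold: for all processes P, Q over A, (i) P ⊓ (Ω □ Q) = P ⊓ (P □ Q), and (ii) (Ω □ P) ⊓ (Ω □ Q) = (Ω □ P) □ (Ω □ Q). -/
/-! Ω □ Q keeps the traces of Q and exactly its failures after a non-empty trace: Ω refuses
nothing stably at ε. Hence both sides of (i) equal `(T_P ∪ T_Q, F_P ∪ {(w, W) ∈ F_Q | w ≠ ε})`,
using `ε ∈ T_P`. In (ii) neither operand has a failure at ε, the only trace where □ and ⊓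
differ. -/

namespace CSP

variable {A : Type*}

/-- A process candidate over `A`: a pair of a trace set and a set of failure
pairs `(w, W)` where the refusal set `W ⊆ A` may be infinite. -/
abbrev Proc (A : Type*) := Set (List A) × Set (List A × Set A)

/-- Conditions (1)–(5) making a pair `(T, F)` a process of the
stable failures model. -/
structure IsProc (P : Proc A) : Prop where
  nil_mem : [] ∈ P.1
  prefix_closed : ∀ w a, w ++ [a] ∈ P.1 → w ∈ P.1
  fail_trace : ∀ w (W : Set A), (w, W) ∈ P.2 → w ∈ P.1
  subset_closed : ∀ w (W V : Set A), (w, W) ∈ P.2 → V ⊆ W → (w, V) ∈ P.2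
  ext_closed : ∀ w (W V : Set A), (w, W) ∈ P.2 →
    (∀ a ∈ V, w ++ [a] ∉ P.1) → (w, W ∪ V) ∈ P.2

/-- A process is finitary when its trace set is finite. -/
def ProcFinitary (P : Proc A) : Prop := P.1.Finite

/-- The future set of a trace of a process. -/
def futP (P : Proc A) (w : List A) : Set A := {a | w ++ [a] ∈ P.1}

/-- Divergence `Ω`. -/
def pomega (A : Type*) : Proc A := ({[]}, ∅)

/-- Deadlock `Stop`. -/
def pstop (A : Type*) : Proc A := ({[]}, {p | p.1 = []})

/-- Action prefix `a → P`. -/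
def pact (a : A) (P : Proc A) : Proc A :=
  ({[]} ∪ {w | ∃ t ∈ P.1, w = a :: t},
   {p | p.1 = [] ∧ a ∉ p.2} ∪ {p | ∃ w, p.1 = a :: w ∧ (w, p.2) ∈ P.2})

/-- Internal choice `P ⊓ Q`. -/
def pintc (P Q : Proc A) : Proc A := (P.1 ∪ Q.1, P.2 ∪ Q.2)

/-- External choice `P □ Q`. -/
def pextc (P Q : Proc A) : Proc A :=
  (P.1 ∪ Q.1,
   {p | p.1 = [] ∧ p ∈ P.2 ∩ Q.2} ∪ {p | p.1 ≠ [] ∧ p ∈ P.2 ∪ Q.2})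

def laterFailures (P : Proc A) : Set (List A × Set A) := {p | p.1 ≠ [] ∧ p ∈ P.2}

theorem pextc_pomega_left (Q : Proc A) :
    pextc (pomega A) Q = ({[]} ∪ Q.1, laterFailures Q) := by
  ext p
  · rfl
  · simp [pextc, pomega, laterFailures]

theorem pextc_eq_pintc_of_forall_nil_notMem {P Q : Proc A}
    (hP : ∀ W, ([], W) ∉ P.2) (hQ : ∀ W, ([], W) ∉ Q.2) : pextc P Q = pintc P Q := by
  refine Prod.ext rfl (Set.ext fun ⟨w, W⟩ => ?_)
  rcases eq_or_ne w [] with rfl | hw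
  · simp [pextc, pintc, hP, hQ]
  · simp [pextc, pintc, hw]

theorem nil_notMem_pextc_pomega_left (Q : Proc A) (W : Set A) :
    ([], W) ∉ (pextc (pomega A) Q).2 := by
  simp [pextc_pomega_left, laterFailures]

theorem pintc_pextc_pomega_right {P : Proc A} (Q : Proc A) (hP : [] ∈ P.1) :
    pintc P (pextc (pomega A) Q) = (P.1 ∪ Q.1, P.2 ∪ laterFailures Q) := by
  rw [pextc_pomega_left]
  refine Prod.ext ?_ rfl
  rw [pintc, ← Set.union_assoc, Set.union_singleton, Set.insert_eq_of_mem hP]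

theorem pintc_pextc_self {P : Proc A} (Q : Proc A) :
    pintc P (pextc P Q) = (P.1 ∪ Q.1, P.2 ∪ laterFailures Q) := by
  ext p
  · simp [pintc, pextc]
  · simp only [pintc, pextc, laterFailures, Set.mem_union, Set.mem_ofPred_eq, Set.mem_inter_iff]
    tauto

theorem derived_omega_laws_general {A : Type*} (P Q : Proc A)
    (hP : IsProc P) :
    pintc P (pextc (pomega A) Q) = pintc P (pextc P Q) ∧
    pintc (pextc (pomega A) P) (pextc (pomega A) Q)
      = pextc (pextc (pomega A) P) (pextc (pomega A) Q) :=
  ⟨(pintc_pextc_pomega_right Q hP.nil_mem).trans (pintc_pextc_self Q).symm,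
    (pextc_eq_pintc_of_forall_nil_notMem (nil_notMem_pextc_pomega_left P)
      (nil_notMem_pextc_pomega_left Q)).symm⟩

/-- the derived CSP(□,Ω) laws in the stable failures model:
`P ⊓ (Ω □ Q) = P ⊓ (P □ Q)` and `(Ω □ P) ⊓ (Ω □ Q) = (Ω □ P) □ (Ω □ Q)`. -/
theorem derived_omega_laws {A : Type*} (P Q : Proc A)
    (hP : IsProc P) (hQ : IsProc Q) :
    pintc P (pextc (pomega A) Q) = pintc P (pextc P Q) ∧
    pintc (pextc (pomega A) P) (pextc (pomega A) Q)
      = pextc (pextc (pomega A) P) (pextc (pomega A) Q) :=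
  derived_omega_laws_general P Q hP

end CSP
end

section
/- Let P be a finitary process over A. Then for every w ∈ T_P there exist n ≥ 0 and sets V₁, …, Vₙ ⊆ fut_P(w) such that for every W ⊆ A one has (w,W) ∈ F_P if and only if W ∩ Vᵢ = ∅ for some i ∈ {1, …, n}. -/
/-!
Only the part of a refusal lying in `fut_P(w)` matters: by (4) and (5), `(w, W) ∈ F_P` iff
`(w, W ∩ fut_P(w)) ∈ F_P`. Since `T_P` is finite, so is `fut_P(w)`, and hence there are only
finitely many refusals `U₁, …, Uₙ ⊆ fut_P(w)`. By (4), `(w, W) ∈ F_P` iff `W ∩ fut_P(w) ⊆ Uᵢ`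
for some `i`, that is, iff `W` misses `Vᵢ := fut_P(w) \ Uᵢ`.
-/

namespace CSP

variable {A : Type*}

theorem futP_finite {P : Proc A} (hfin : ProcFinitary P) (w : List A) : (futP P w).Finite :=
  hfin.preimage ((List.append_right_injective w).comp List.singleton_injective).injOn

def futRefusals (P : Proc A) (w : List A) : Set (Set A) := {U | U ⊆ futP P w ∧ (w, U) ∈ P.2}

theorem futRefusals_finite {P : Proc A} (hfin : ProcFinitary P) (w : List A) :
    (futRefusals P w).Finite :=
  (futP_finite hfin w).finite_subsets.subset fun _ hU => hU.1

theorem IsProc.mem_failures_iff_inter_futP {P : Proc A} (hP : IsProc P) {w : List A}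
    {W : Set A} : (w, W) ∈ P.2 ↔ (w, W ∩ futP P w) ∈ P.2 := by
  refine ⟨fun hW => hP.subset_closed w W _ hW Set.inter_subset_left, fun hW => ?_⟩
  have h := hP.ext_closed w _ (W \ futP P w) hW fun _ ha => ha.2
  rwa [Set.inter_union_sdiff] at h

theorem IsProc.mem_failures_iff_exists_futRefusals {P : Proc A} (hP : IsProc P) {w : List A}
    {W : Set A} : (w, W) ∈ P.2 ↔ ∃ U ∈ futRefusals P w, W ∩ futP P w ⊆ U := by
  rw [hP.mem_failures_iff_inter_futP]
  refine ⟨fun hW => ⟨_, ⟨Set.inter_subset_right, hW⟩, subset_rfl⟩, ?_⟩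
  rintro ⟨U, ⟨-, hU⟩, hWU⟩
  exact hP.subset_closed w U _ hU hWU

theorem process_refusal_accounting_general {A : Type*} (P : Proc A)
    (hP : IsProc P) (hfin : ProcFinitary P) (w : List A) :
    ∃ (n : ℕ) (V : Fin n → Set A),
      (∀ i, V i ⊆ futP P w) ∧
      (∀ W : Set A, (w, W) ∈ P.2 ↔ ∃ i, W ∩ V i = ∅) := by
  obtain ⟨n, U, -, hU⟩ := (futRefusals_finite hfin w).fin_param
  refine ⟨n, fun i => futP P w \ U i, fun i => Set.sdiff_subset, fun W => ?_⟩
  simp only [hP.mem_failures_iff_exists_futRefusals, ← hU, Set.exists_range_iff,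
    ← Set.inter_sdiff_assoc, Set.sdiff_eq_empty]

/-- refusal accounting for finitary processes: for each trace `w`
there are `n ≥ 0` subsets `V₁, …, Vₙ` of `fut_P(w)` such that `(w,W) ∈ F_P`
iff `W` misses some `Vᵢ`. -/
theorem process_refusal_accounting {A : Type*} (P : Proc A)
    (hP : IsProc P) (hfin : ProcFinitary P) (w : List A) (hw : w ∈ P.1) :
    ∃ (n : ℕ) (V : Fin n → Set A),
      (∀ i, V i ⊆ futP P w) ∧
      (∀ W : Set A, (w, W) ∈ P.2 ↔ ∃ i, W ∩ V i = ∅) :=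
  process_refusal_accounting_general P hP hfin w

end CSP
end

section
/- Let X be a set. The smallest collection of X-processes over A that contains Ω and η(x) for every x ∈ X, and is closed under internal choice ⊓ and the deterministic external choice operations □_{a⃗} and □^Ω_{a⃗} (for every finite sequence of pairwise distinct actions a₁,…,aₙ, n ≥ 0), is exactly the collection of all finitary X-processes. -/
namespace CSP

variable {A X : Type*}

/-- An `X`-process candidate over `A`: its trace set contains plain traces
`(w, none)` and `X`-traces `(w, some x)`, and its failure pairs `(w, W)` have
`W ⊆ A` possibly infinite. -/
abbrev XProc (A X : Type*) := Set (List A × Option X) × Set (List A × Set A)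

/-- Conditions (1)–(5), together with `X`-trace prefix closure, making a pair
`(T, F)` an `X`-process. -/
structure IsXProc (P : XProc A X) : Prop where
  nil_mem : ([], (none : Option X)) ∈ P.1
  prefix_closed : ∀ (w : List A) (a : A),
    (w ++ [a], (none : Option X)) ∈ P.1 → (w, (none : Option X)) ∈ P.1
  xtrace_closed : ∀ (w : List A) (x : X),
    (w, some x) ∈ P.1 → (w, (none : Option X)) ∈ P.1
  fail_trace : ∀ (w : List A) (W : Set A),
    (w, W) ∈ P.2 → (w, (none : Option X)) ∈ P.1
  subset_closed : ∀ (w : List A) (W V : Set A),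
    (w, W) ∈ P.2 → V ⊆ W → (w, V) ∈ P.2
  ext_closed : ∀ (w : List A) (W V : Set A), (w, W) ∈ P.2 →
    (∀ a ∈ V, (w ++ [a], (none : Option X)) ∉ P.1) → (w, W ∪ V) ∈ P.2

/-- An `X`-process is finitary when its trace set is finite. -/
def XFinitary (P : XProc A X) : Prop := P.1.Finite

/-- The unit `η(x) = ({ε, εx}, ∅)`. -/
def xeta (A : Type*) {X : Type*} (x : X) : XProc A X :=
  ({([], none), ([], some x)}, ∅)

/-- Divergence `Ω = ({ε}, ∅)`. -/
def xomega (A X : Type*) : XProc A X := ({([], none)}, ∅)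

/-- Internal choice `P ⊓ Q`. -/
def xintc (P Q : XProc A X) : XProc A X := (P.1 ∪ Q.1, P.2 ∪ Q.2)

/-- Deterministic external choice `□_{a⃗}(P₁,…,Pₙ)`, given as a list of
action/process pairs (the actions are required to be pairwise distinct via a
`Nodup` hypothesis wherever this operation is used). -/
def xdet (cs : List (A × XProc A X)) : XProc A X :=
  ({([], none)} ∪ {t | ∃ c ∈ cs, ∃ s ∈ c.2.1, t = (c.1 :: s.1, s.2)},
   {p | p.1 = [] ∧ ∀ c ∈ cs, c.1 ∉ p.2} ∪
   {p | ∃ c ∈ cs, ∃ w, p.1 = c.1 :: w ∧ (w, p.2) ∈ c.2.2})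

/-- Deterministic external choice with an `Ω`-summand `□^Ω_{a⃗}(P₁,…,Pₙ)`. -/
def xdetO (cs : List (A × XProc A X)) : XProc A X :=
  ({([], none)} ∪ {t | ∃ c ∈ cs, ∃ s ∈ c.2.1, t = (c.1 :: s.1, s.2)},
   {p | ∃ c ∈ cs, ∃ w, p.1 = c.1 :: w ∧ (w, p.2) ∈ c.2.2})

/-- The collection of `X`-processes generated from `Ω` and the `η(x)` by
internal choice and the deterministic external choices `□_{a⃗}`, `□^Ω_{a⃗}`. -/
inductive XGen (A X : Type*) : XProc A X → Prop where
  | omega : XGen A X (xomega A X)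
  | eta (x : X) : XGen A X (xeta A x)
  | intc {P Q : XProc A X} : XGen A X P → XGen A X Q → XGen A X (xintc P Q)
  | det (cs : List (A × XProc A X)) : (cs.map Prod.fst).Nodup →
      (∀ c ∈ cs, XGen A X c.2) → XGen A X (xdet cs)
  | detO (cs : List (A × XProc A X)) : (cs.map Prod.fst).Nodup →
      (∀ c ∈ cs, XGen A X c.2) → XGen A X (xdetO cs)

/-!
The generators are `X`-processes with finitely many traces, and `⊓`, `□_{a⃗}`, `□^Ω_{a⃗}`
preserve both properties. Conversely, a finitary `X`-process `P` with initial actions `I`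
is the internal choice of the `η(x)` for its initial results `x`, of `□_{I ∖ U}(P/a)` for
every initial refusal `U ⊆ I`, and of `□^Ω_I(P/a)`; each derivative `P/a` has fewer traces
than `P`, so induction on the number of traces shows that `P` is generated.
-/

section ExternalChoice

variable {cs : List (A × XProc A X)} {a : A} {w : List A} {o : Option X} {W : Set A}

@[simp] lemma xdet_fst (cs : List (A × XProc A X)) : (xdet cs).1 = (xdetO cs).1 := rfl

@[simp] lemma nil_mem_xdetO_fst : (([] : List A), o) ∈ (xdetO cs).1 ↔ o = none := by
  simp [xdetO]

@[simp] lemma cons_mem_xdetO_fst :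
    (a :: w, o) ∈ (xdetO cs).1 ↔ ∃ c ∈ cs, c.1 = a ∧ (w, o) ∈ c.2.1 := by
  simp only [xdetO, Set.mem_union, Set.mem_singleton_iff, Set.mem_ofPred_eq, Prod.mk.injEq,
    List.cons_ne_nil, false_and, false_or, List.cons.injEq]
  constructor
  · rintro ⟨c, hc, s, hs, ⟨rfl, rfl⟩, rfl⟩
    exact ⟨c, hc, rfl, hs⟩
  · rintro ⟨c, hc, rfl, hs⟩
    exact ⟨c, hc, _, hs, ⟨rfl, rfl⟩, rfl⟩

@[simp] lemma nil_notMem_xdetO_snd : (([] : List A), W) ∉ (xdetO cs).2 := by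
  simp [xdetO]

@[simp] lemma cons_mem_xdetO_snd :
    (a :: w, W) ∈ (xdetO cs).2 ↔ ∃ c ∈ cs, c.1 = a ∧ (w, W) ∈ c.2.2 := by
  simp only [xdetO, Set.mem_ofPred_eq, List.cons.injEq]
  constructor
  · rintro ⟨c, hc, w', ⟨rfl, rfl⟩, hm⟩
    exact ⟨c, hc, rfl, hm⟩
  · rintro ⟨c, hc, rfl, hm⟩
    exact ⟨c, hc, w, ⟨rfl, rfl⟩, hm⟩

@[simp] lemma nil_mem_xdet_snd : (([] : List A), W) ∈ (xdet cs).2 ↔ ∀ c ∈ cs, c.1 ∉ W := by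
  simp [xdet]

@[simp] lemma cons_mem_xdet_snd : (a :: w, W) ∈ (xdet cs).2 ↔ (a :: w, W) ∈ (xdetO cs).2 := by
  simp [xdet, xdetO]

end ExternalChoice

section Soundness

variable {cs : List (A × XProc A X)}

lemma isXProc_xomega : IsXProc (xomega A X) := by
  constructor <;> simp [xomega]

lemma isXProc_xeta (x : X) : IsXProc (xeta A x) := by
  constructor <;> simp [xeta]

lemma isXProc_xintc {P Q : XProc A X} (hP : IsXProc P) (hQ : IsXProc Q) :
    IsXProc (xintc P Q) where
  nil_mem := Or.inl hP.nil_mem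
  prefix_closed w a := Or.imp (hP.prefix_closed w a) (hQ.prefix_closed w a)
  xtrace_closed w x := Or.imp (hP.xtrace_closed w x) (hQ.xtrace_closed w x)
  fail_trace w W := Or.imp (hP.fail_trace w W) (hQ.fail_trace w W)
  subset_closed w W V h hVW :=
    h.imp (hP.subset_closed w W V · hVW) (hQ.subset_closed w W V · hVW)
  ext_closed w W V h hV :=
    h.imp (hP.ext_closed w W V · fun a ha hm => hV a ha (Or.inl hm))
      (hQ.ext_closed w W V · fun a ha hm => hV a ha (Or.inr hm))

lemma isXProc_xdetO (h : ∀ c ∈ cs, IsXProc c.2) : IsXProc (xdetO cs) where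
  nil_mem := by simp
  prefix_closed := by
    rintro (_ | ⟨b, w⟩) a hw
    · simp
    · simp only [List.cons_append, cons_mem_xdetO_fst] at hw ⊢
      obtain ⟨c, hc, rfl, hs⟩ := hw
      exact ⟨c, hc, rfl, (h c hc).prefix_closed w a hs⟩
  xtrace_closed := by
    rintro (_ | ⟨b, w⟩) x hw
    · simp
    · simp only [cons_mem_xdetO_fst] at hw ⊢
      obtain ⟨c, hc, rfl, hs⟩ := hw
      exact ⟨c, hc, rfl, (h c hc).xtrace_closed w x hs⟩
  fail_trace := by
    rintro (_ | ⟨b, w⟩) W hw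
    · simp
    · simp only [cons_mem_xdetO_fst, cons_mem_xdetO_snd] at hw ⊢
      obtain ⟨c, hc, rfl, hm⟩ := hw
      exact ⟨c, hc, rfl, (h c hc).fail_trace w W hm⟩
  subset_closed := by
    rintro (_ | ⟨b, w⟩) W V hw hVW
    · simp at hw
    · simp only [cons_mem_xdetO_snd] at hw ⊢
      obtain ⟨c, hc, rfl, hm⟩ := hw
      exact ⟨c, hc, rfl, (h c hc).subset_closed w W V hm hVW⟩
  ext_closed := by
    rintro (_ | ⟨b, w⟩) W V hw hV
    · simp at hw
    · simp only [cons_mem_xdetO_snd] at hw ⊢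
      obtain ⟨c, hc, rfl, hm⟩ := hw
      refine ⟨c, hc, rfl, (h c hc).ext_closed w W V hm fun a ha hs => hV a ha ?_⟩
      exact cons_mem_xdetO_fst.2 ⟨c, hc, rfl, hs⟩

lemma isXProc_xdet (h : ∀ c ∈ cs, IsXProc c.2) : IsXProc (xdet cs) := by
  have hO := isXProc_xdetO h
  refine ⟨hO.nil_mem, hO.prefix_closed, hO.xtrace_closed, ?_, ?_, ?_⟩
  · rintro (_ | ⟨b, w⟩) W hw
    · exact hO.nil_mem
    · exact hO.fail_trace _ W (cons_mem_xdet_snd.1 hw)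
  · rintro (_ | ⟨b, w⟩) W V hw hVW
    · simp only [nil_mem_xdet_snd] at hw ⊢
      exact fun c hc hV => hw c hc (hVW hV)
    · simpa using hO.subset_closed _ W V (cons_mem_xdet_snd.1 hw) hVW
  · rintro (_ | ⟨b, w⟩) W V hw hV
    · simp only [nil_mem_xdet_snd, Set.mem_union, not_or] at hw ⊢
      exact fun c hc => ⟨hw c hc, fun hcV =>
        hV c.1 hcV (cons_mem_xdetO_fst.2 ⟨c, hc, rfl, (h c hc).nil_mem⟩)⟩
    · simpa using hO.ext_closed _ W V (cons_mem_xdet_snd.1 hw) hV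

lemma finite_xdetO_fst (h : ∀ c ∈ cs, c.2.1.Finite) : (xdetO cs).1.Finite := by
  refine (Set.finite_singleton _).union ?_
  have hcover : {t | ∃ c ∈ cs, ∃ s ∈ c.2.1, t = (c.1 :: s.1, s.2)} =
      ⋃ c ∈ {c | c ∈ cs}, (fun s : List A × Option X => (c.1 :: s.1, s.2)) '' c.2.1 := by
    ext
    simp [eq_comm]
  rw [hcover]
  exact cs.finite_toSet.biUnion fun c hc => (h c hc).image _

theorem XGen.isXProc_and_finitary {P : XProc A X} (h : XGen A X P) :
    IsXProc P ∧ XFinitary P := by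
  induction h with
  | omega => exact ⟨isXProc_xomega, Set.finite_singleton _⟩
  | eta x => exact ⟨isXProc_xeta x, (Set.finite_singleton _).insert _⟩
  | intc _ _ ihP ihQ => exact ⟨isXProc_xintc ihP.1 ihQ.1, ihP.2.union ihQ.2⟩
  | det cs _ _ ih =>
    exact ⟨isXProc_xdet fun c hc => (ih c hc).1, finite_xdetO_fst fun c hc => (ih c hc).2⟩
  | detO cs _ _ ih =>
    exact ⟨isXProc_xdetO fun c hc => (ih c hc).1, finite_xdetO_fst fun c hc => (ih c hc).2⟩

end Soundness

section Derivative

variable {P : XProc A X}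

def initials (P : XProc A X) : Set A := {a | ([a], none) ∈ P.1}

def xderiv (P : XProc A X) (a : A) : XProc A X :=
  ((fun s : List A × Option X => (a :: s.1, s.2)) ⁻¹' P.1,
   (fun p : List A × Set A => (a :: p.1, p.2)) ⁻¹' P.2)

lemma isXProc_xderiv (hP : IsXProc P) {a : A} (ha : a ∈ initials P) :
    IsXProc (xderiv P a) where
  nil_mem := ha
  prefix_closed w := hP.prefix_closed (a :: w)
  xtrace_closed w := hP.xtrace_closed (a :: w)
  fail_trace w := hP.fail_trace (a :: w)
  subset_closed w := hP.subset_closed (a :: w)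
  ext_closed w := hP.ext_closed (a :: w)

lemma prepend_injective (a : A) :
    Function.Injective (fun s : List A × Option X => (a :: s.1, s.2)) := by
  rintro ⟨w, o⟩ ⟨w', o'⟩ h
  simp_all

lemma finite_initials (hfin : P.1.Finite) : (initials P).Finite :=
  hfin.preimage fun a _ b _ h => by simpa using h

lemma finite_nil_results (hfin : P.1.Finite) :
    {x : X | (([] : List A), some x) ∈ P.1}.Finite :=
  hfin.preimage fun x _ y _ h => by simpa using h

lemma finite_xderiv_fst (hfin : P.1.Finite) (a : A) : (xderiv P a).1.Finite :=
  hfin.preimage (prepend_injective a).injOn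

lemma ncard_xderiv_fst_lt (hP : IsXProc P) (hfin : P.1.Finite) (a : A) :
    (xderiv P a).1.ncard < P.1.ncard := by
  have hsub : (fun s : List A × Option X => (a :: s.1, s.2)) '' (xderiv P a).1 ⊆
      P.1 \ {([], none)} := by
    rintro t ⟨s, hs, rfl⟩
    exact ⟨hs, by simp⟩
  calc (xderiv P a).1.ncard
      = ((fun s : List A × Option X => (a :: s.1, s.2)) '' (xderiv P a).1).ncard :=
        (Set.ncard_image_of_injective _ (prepend_injective a)).symm
    _ ≤ (P.1 \ {([], none)}).ncard := Set.ncard_le_ncard hsub hfin.sdiff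
    _ < P.1.ncard := Set.ncard_sdiff_singleton_lt_of_mem hP.nil_mem hfin

lemma IsXProc.mem_of_append_mem (hP : IsXProc P) {w v : List A} {o : Option X}
    (hm : (w ++ v, o) ∈ P.1) : (w, none) ∈ P.1 := by
  replace hm : (w ++ v, none) ∈ P.1 := by
    cases o with
    | none => exact hm
    | some x => exact hP.xtrace_closed _ x hm
  induction v using List.reverseRecOn with
  | nil => simpa using hm
  | append_singleton v a ih =>
    exact ih (hP.prefix_closed (w ++ v) a (by rwa [← List.append_assoc] at hm))

lemma IsXProc.mem_initials_of_cons_mem (hP : IsXProc P) {a : A} {w : List A} {o : Option X}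
    (hm : (a :: w, o) ∈ P.1) : a ∈ initials P :=
  hP.mem_of_append_mem (w := [a]) hm

/-- Condition (5) adds back the actions outside `initials P`. -/
lemma IsXProc.nil_mem_snd_iff_inter_initials (hP : IsXProc P) {W : Set A} :
    (([] : List A), W) ∈ P.2 ↔ (([] : List A), W ∩ initials P) ∈ P.2 := by
  refine ⟨fun h => hP.subset_closed _ _ _ h Set.inter_subset_left, fun h => ?_⟩
  have hW := hP.ext_closed [] _ (W \ initials P) h fun a ha => ha.2
  rwa [Set.inter_union_sdiff] at hW

end Derivative

section NormalForm

variable {P : XProc A X} {as bs : List A} {xs : List X} {Us : List (Set A)}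
  {a : A} {w : List A} {o : Option X} {W : Set A}

def branches (P : XProc A X) (as : List A) : List (A × XProc A X) :=
  as.map fun a => (a, xderiv P a)

@[simp] lemma cons_mem_xdetO_branches_fst :
    (a :: w, o) ∈ (xdetO (branches P bs)).1 ↔ a ∈ bs ∧ (a :: w, o) ∈ P.1 := by
  simp [branches, xderiv]

@[simp] lemma cons_mem_xdetO_branches_snd :
    (a :: w, W) ∈ (xdetO (branches P bs)).2 ↔ a ∈ bs ∧ (a :: w, W) ∈ P.2 := by
  simp [branches, xderiv]

@[simp] lemma nil_mem_xdet_branches_snd :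
    (([] : List A), W) ∈ (xdet (branches P bs)).2 ↔ ∀ a ∈ bs, a ∉ W := by
  simp only [nil_mem_xdet_snd, branches, List.forall_mem_map]

/-- `⊓_{x ∈ xs} η(x) ⊓ ⊓_{U ∈ Us} □_{as \ U}(P/a) ⊓ □^Ω_{as}(P/a)`. -/
noncomputable def normalForm (P : XProc A X) (as : List A) (xs : List X) (Us : List (Set A)) :
    XProc A X :=
  open Classical in
  (xs.map (xeta A) ++ Us.map fun U => xdet (branches P (as.filter (· ∉ U)))).foldr xintc
    (xdetO (branches P as))

lemma foldr_xintc_fst (L : List (XProc A X)) (B : XProc A X) :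
    (L.foldr xintc B).1 = (⋃ Q ∈ L, Q.1) ∪ B.1 := by
  induction L with
  | nil => simp
  | cons Q L ih => simp [xintc, ih, Set.union_assoc]

lemma foldr_xintc_snd (L : List (XProc A X)) (B : XProc A X) :
    (L.foldr xintc B).2 = (⋃ Q ∈ L, Q.2) ∪ B.2 := by
  induction L with
  | nil => simp
  | cons Q L ih => simp [xintc, ih, Set.union_assoc]

lemma xgen_foldr_xintc {L : List (XProc A X)} {B : XProc A X} (hB : XGen A X B)
    (hL : ∀ Q ∈ L, XGen A X Q) : XGen A X (L.foldr xintc B) := by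
  induction L with
  | nil => exact hB
  | cons Q L ih =>
    exact .intc (hL Q List.mem_cons_self) (ih fun R hR => hL R (List.mem_cons_of_mem Q hR))

lemma xgen_normalForm (has : as.Nodup) (hgen : ∀ a ∈ as, XGen A X (xderiv P a)) :
    XGen A X (normalForm P as xs Us) := by
  have hdet : ∀ bs, bs.Sublist as → XGen A X (xdetO (branches P bs)) ∧
      XGen A X (xdet (branches P bs)) := by
    intro bs hbs
    have hnd : ((branches P bs).map Prod.fst).Nodup := by
      simpa [branches, Function.comp_def] using has.sublist hbs
    have hcs : ∀ c ∈ branches P bs, XGen A X c.2 := by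
      simp only [branches, List.mem_map]
      rintro _ ⟨a, ha, rfl⟩
      exact hgen a (hbs.subset ha)
    exact ⟨.detO _ hnd hcs, .det _ hnd hcs⟩
  refine xgen_foldr_xintc (hdet as (List.Sublist.refl as)).1 ?_
  simp only [List.mem_append, List.mem_map]
  rintro _ (⟨x, -, rfl⟩ | ⟨U, -, rfl⟩)
  · exact .eta x
  · exact (hdet _ List.filter_sublist).2

lemma cons_mem_normalForm_fst :
    (a :: w, o) ∈ (normalForm P as xs Us).1 ↔ a ∈ as ∧ (a :: w, o) ∈ P.1 := by
  simp +contextual [normalForm, foldr_xintc_fst, xeta, -cons_mem_xdetO_fst, or_iff_right_iff_imp]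

lemma cons_mem_normalForm_snd :
    (a :: w, W) ∈ (normalForm P as xs Us).2 ↔ a ∈ as ∧ (a :: w, W) ∈ P.2 := by
  simp +contextual [normalForm, foldr_xintc_snd, xeta, -cons_mem_xdetO_snd, or_iff_right_iff_imp]

lemma nil_mem_normalForm_fst :
    (([] : List A), o) ∈ (normalForm P as xs Us).1 ↔ o = none ∨ ∃ x ∈ xs, o = some x := by
  cases o <;> simp [normalForm, foldr_xintc_fst, xeta]

lemma nil_mem_normalForm_snd :
    (([] : List A), W) ∈ (normalForm P as xs Us).2 ↔ ∃ U ∈ Us, ∀ a ∈ as, a ∉ U → a ∉ W := by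
  simp [normalForm, foldr_xintc_snd, xeta, -nil_mem_xdet_snd]

lemma IsXProc.eq_normalForm (hP : IsXProc P) (has : ∀ a, a ∈ as ↔ a ∈ initials P)
    (hxs : ∀ x, x ∈ xs ↔ (([] : List A), some x) ∈ P.1)
    (hUs : ∀ U, U ∈ Us ↔ U ⊆ initials P ∧ (([] : List A), U) ∈ P.2) :
    P = normalForm P as xs Us := by
  have hhead {a : A} {w : List A} {o : Option X} (h : (a :: w, o) ∈ P.1) : a ∈ as :=
    (has a).2 (hP.mem_initials_of_cons_mem h)
  refine Prod.ext (Set.ext ?_) (Set.ext ?_)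
  · rintro ⟨_ | ⟨a, w⟩, o⟩
    · rw [nil_mem_normalForm_fst]
      cases o <;> simp [hP.nil_mem, hxs]
    · rw [cons_mem_normalForm_fst]
      exact ⟨fun h => ⟨hhead h, h⟩, And.right⟩
  · rintro ⟨_ | ⟨a, w⟩, W⟩
    · rw [nil_mem_normalForm_snd, hP.nil_mem_snd_iff_inter_initials]
      constructor
      · intro h
        refine ⟨W ∩ initials P, (hUs _).2 ⟨Set.inter_subset_right, h⟩, ?_⟩
        exact fun a ha haU haW => haU ⟨haW, (has a).1 ha⟩
      · rintro ⟨U, hU, hUW⟩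
        refine hP.subset_closed _ _ _ ((hUs U).1 hU).2 ?_
        rintro a ⟨haW, haI⟩
        by_contra haU
        exact hUW a ((has a).2 haI) haU haW
    · rw [cons_mem_normalForm_snd]
      exact ⟨fun h => ⟨hhead (hP.fail_trace _ _ h), h⟩, And.right⟩

end NormalForm

theorem IsXProc.xgen_of_finite {P : XProc A X} (hP : IsXProc P) (hfin : P.1.Finite) :
    XGen A X P := by
  induction hn : P.1.ncard using Nat.strong_induction_on generalizing P with
  | _ n ih =>
  have hU : {U | U ⊆ initials P ∧ (([] : List A), U) ∈ P.2}.Finite :=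
    (finite_initials hfin).finite_subsets.subset fun U hU => hU.1
  rw [hP.eq_normalForm (as := (finite_initials hfin).toFinset.toList)
    (xs := (finite_nil_results hfin).toFinset.toList) (Us := hU.toFinset.toList)
    (by simp) (by simp) (by simp)]
  refine xgen_normalForm (Finset.nodup_toList _) fun a ha => ?_
  have ha : a ∈ initials P := by simpa using ha
  exact ih _ (hn ▸ ncard_xderiv_fst_lt hP hfin a) (isXProc_xderiv hP ha)
    (finite_xderiv_fst hfin a) rfl

/-- the smallest collection of `X`-processes containing `Ω` and
each `η(x)` and closed under `⊓`, `□_{a⃗}` and `□^Ω_{a⃗}` is exactly the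
collection of finitary `X`-processes. -/
theorem generated_iff_finitary_Xprocess {A X : Type*} (P : XProc A X) :
    XGen A X P ↔ (IsXProc P ∧ XFinitary P) :=
  ⟨XGen.isXProc_and_finitary, fun ⟨hP, hfin⟩ => hP.xgen_of_finite hfin⟩

end CSP
end
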